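/- Two rotor configurations ρ1 and ρ2 on G are equivalent (ρ1 ≡ ρ2) if and only if there exists a rotor configuration accessible from both ρ1 and ρ2 by sequences of cycle pushing moves. -/

import Mathlib

open Function

/-- A strongly connected finite directed multigraph (self-loops and multiple arcs
allowed), given by source and head maps `src, head : E → V`, together with a nonempty
target set `T` and a rotor mechanism at each vertex: `next` is a cyclic ordering of
the arcs emanating from each vertex (it permutes the arcs, preserves the source, and
acts transitively on the arcs emanating from any fixed vertex). -/
structure RotorSystem (V E : Type) [Fintype V] [DecidableEq V] [Fintype E]
    [DecidableEq E] where
  src : E → V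
  head : E → V
  T : Finset V
  T_nonempty : T.Nonempty
  strongly_connected : ∀ v w : V,
    Relation.ReflTransGen (fun a b => ∃ e : E, src e = a ∧ head e = b) v w
  next : E → E
  next_src : ∀ e, src (next e) = src e
  next_bijective : Function.Bijective next
  next_cyclic : ∀ e e', src e = src e' → ∃ k : ℕ, next^[k] e = e'

namespace RotorSystem

variable {V E : Type} [Fintype V] [DecidableEq V] [Fintype E] [DecidableEq E]

/-- The set `V₀ = V - T` of non-target vertices. -/
abbrev V0 (S : RotorSystem V E) : Type := {v : V // v ∉ S.T}

/-- A rotor configuration: each non-target vertex carries an arc emanating from it. -/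
abbrev RConf (S : RotorSystem V E) : Type :=
  {ρ : S.V0 → E // ∀ v : S.V0, S.src (ρ v) = v.1}

/-- A particle configuration: a number of particles at each non-target vertex. -/
abbrev PConf (S : RotorSystem V E) : Type := S.V0 → ℕ

variable (S : RotorSystem V E)

/-- One step of a single particle's rotor walk: at a non-target vertex the rotor is
first progressed and the particle then moves along the new rotor arc; target vertices
absorb the particle. -/
def step (p : V × S.RConf) : V × S.RConf :=
  if h : p.1 ∈ S.T then p
  else
    (S.head (S.next (p.2.1 ⟨p.1, h⟩)),
      ⟨Function.update p.2.1 ⟨p.1, h⟩ (S.next (p.2.1 ⟨p.1, h⟩)), by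
        intro w
        rcases eq_or_ne w ⟨p.1, h⟩ with rfl | hw
        · rw [Function.update_self, S.next_src]
          exact p.2.2 ⟨p.1, h⟩
        · rw [Function.update_of_ne hw]
          exact p.2.2 w⟩)

open Classical in
/-- Route a single particle from `x` by rotor walk until it first reaches the target
set; the result is the pair (final position, final rotor configuration). -/
noncomputable def route (x : V) (ρ : S.RConf) : V × S.RConf :=
  if h : ∃ n, (S.step^[n] (x, ρ)).1 ∈ S.T then S.step^[Nat.find h] (x, ρ) else (x, ρ)

/-- `t_x(ρ)`: the target vertex reached by a single particle started at `x` with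
initial rotor configuration `ρ`. -/
noncomputable def tgt (x : V) (ρ : S.RConf) : V := (S.route x ρ).1

/-- The particle addition operator `E_v`: add one particle at `v` and route it to the
target set. -/
noncomputable def addAt (v : S.V0) (ρ : S.RConf) : S.RConf := (S.route v.1 ρ).2

/-- The action `σρ` of a particle configuration on a rotor configuration: place
`σ v` particles at each vertex `v` and route them all to the target set. -/
noncomputable def act (σ : S.PConf) (ρ : S.RConf) : S.RConf :=
  (Finset.univ : Finset S.V0).toList.foldr (fun v r => (S.addAt v)^[σ v] r) ρ

/-- Equivalence of rotor configurations: `ρ ≡ ρ'` iff `σρ = σρ'` for some particle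
configuration `σ`. -/
def REquiv (ρ ρ' : S.RConf) : Prop := ∃ σ : S.PConf, S.act σ ρ = S.act σ ρ'

/-- The outdegree `d(v)`. -/
def outdeg (v : V) : ℕ := (Finset.univ.filter fun e : E => S.src e = v).card

/-- The number `d(v,w)` of arcs from `v` to `w`. -/
def numArcs (v w : V) : ℕ :=
  (Finset.univ.filter fun e : E => S.src e = v ∧ S.head e = w).card

/-- A particle configuration is stable if every non-target vertex holds at most
`d(v) - 1` particles. -/
def IsStable (σ : S.PConf) : Prop := ∀ v : S.V0, σ v < S.outdeg v.1

/-- Parallel toppling: every unstable vertex topples once, sending one particle along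
each arc emanating from it. -/
def toppleStep (σ : S.PConf) : S.PConf := fun v =>
  (if S.outdeg v.1 ≤ σ v then σ v - S.outdeg v.1 else σ v) +
    ∑ w : S.V0, (if S.outdeg w.1 ≤ σ w then S.numArcs w.1 v.1 else 0)

open Classical in
/-- The stabilization `σ°` of a particle configuration. -/
noncomputable def stabilize (σ : S.PConf) : S.PConf :=
  if h : ∃ n, S.IsStable (S.toppleStep^[n] σ) then S.toppleStep^[Nat.find h] σ else σ

/-- A stable particle configuration is recurrent if it is reachable (by adding
particles and stabilizing) from every particle configuration.  The recurrent
configurations form the sandpile group `S(G/T)` under addition-then-stabilization. -/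
def IsRecurrent (τ : S.PConf) : Prop :=
  S.IsStable τ ∧ ∀ σ : S.PConf, ∃ τ' : S.PConf, τ = S.stabilize (τ' + σ)

/-- `e` is the identity element of the sandpile group `S(G/T)`. -/
def IsSandpileIdentity (e : S.PConf) : Prop :=
  S.IsRecurrent e ∧ ∀ τ : S.PConf, S.IsRecurrent τ → S.stabilize (e + τ) = τ

/-- The rotor arcs of `ρ`, as a relation on vertices. -/
def rotorRel (ρ : S.RConf) (a b : V) : Prop :=
  ∃ h : a ∉ S.T, S.head (ρ.1 ⟨a, h⟩) = b

/-- A rotor configuration is acyclic if its rotor arcs contain no directed cycle. -/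
def IsAcyclicConf (ρ : S.RConf) : Prop :=
  ∀ v : V, ¬ Relation.TransGen (S.rotorRel ρ) v v

/-- `ρ'` is obtained from `ρ` by pushing a cycle: there are distinct non-target
vertices `v_0, …, v_{r-1}` with the rotor arc of `v_j` pointing to `v_{j+1}`
(cyclically); each such rotor is regressed one step, other rotors are unchanged. -/
def IsCyclePush (ρ ρ' : S.RConf) : Prop :=
  ∃ r : ℕ, 0 < r ∧ ∃ f : ZMod r → S.V0, Function.Injective f ∧
    (∀ j : ZMod r, S.head (ρ.1 (f j)) = (f (j + 1)).1) ∧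
    (∀ j : ZMod r, S.next (ρ'.1 (f j)) = ρ.1 (f j)) ∧
    (∀ v : S.V0, v ∉ Set.range f → ρ'.1 v = ρ.1 v)

end RotorSystem

/-!
A particle started on a pushed cycle runs once around it and restores it, so adding a particle at
a cycle vertex undoes a cycle push; a particle started elsewhere either reaches the cycle and
merges in the same way, or never meets it and leaves the push intact. Hence cycle pushes commute
with the action of particle configurations, and configurations linked by pushes are identified by
the configuration `1` with one particle per vertex.

Conversely, pushing cycles terminates, since the total absorption time `∑ v, hitTime (v, ρ)`
strictly increases, and it ends in an acyclic configuration. The action of a particle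
configuration is injective on acyclic configurations: if two walks from `w` end with the same
rotors, flow conservation forces the vertices where the first walk departs more often to carry
a cycle of rotors of the second. Now if `σ ρ₁ = σ ρ₂`, push `ρ₁, ρ₂` to acyclic `τ₁, τ₂`; the
acyclic `σ τ₁, σ τ₂` are identified by `1`, so they are equal, and so are `τ₁, τ₂`.
-/

lemma Relation.not_transGen_self_of_rank_lt {α : Type*} {R R' : α → α → Prop} {U : α → Prop}
    {rank : α → ℕ} (hU : ∀ a b, R' a b → U a → R a b)
    (hrank : ∀ a b, R' a b → ¬ U a → ¬ U b ∧ rank a < rank b)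
    (hR : ∀ x, ¬ Relation.TransGen R x x) (x : α) : ¬ Relation.TransGen R' x x := by
  have outside {a b : α} (hab : Relation.TransGen R' a b) (ha : ¬ U a) :
      ¬ U b ∧ rank a < rank b := by
    induction hab with
    | single h => exact hrank _ _ h ha
    | tail _ h ih => exact ⟨(hrank _ _ h ih.1).1, ih.2.trans (hrank _ _ h ih.1).2⟩
  have inside {a b : α} (hab : Relation.TransGen R' a b) (hb : U b) : Relation.TransGen R a b := by
    induction hab with
    | single h => exact .single (hU _ _ h (by_contra fun ha => (hrank _ _ h ha).1 hb))
    | tail _ h ih =>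
      have hc := by_contra fun hc => (hrank _ _ h hc).1 hb
      exact (ih hc).tail (hU _ _ h hc)
  intro hx
  by_cases hxU : U x
  · exact hR x (inside hx hxU)
  · exact (outside hx hxU).2.false

lemma Relation.exists_transGen_self_of_forall_exists {α : Type*} [Finite α] {R : α → α → Prop}
    {p : α → Prop} {a : α} (ha : p a) (h : ∀ a, p a → ∃ b, p b ∧ R a b) :
    ∃ x, Relation.TransGen R x x := by
  by_contra! hR
  let r : α → α → Prop := fun b a => Relation.TransGen R a b
  have : IsTrans α r := ⟨fun _ _ _ hab hbc => hbc.trans hab⟩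
  have : Std.Irrefl r := ⟨hR⟩
  obtain ⟨m, hm, hmax⟩ := (Finite.wellFounded_of_trans_of_irrefl r).has_min {x | p x} ⟨a, ha⟩
  obtain ⟨b, hb, hmb⟩ := h m hm
  exact hmax b hb (.single hmb)

open Filter

namespace RotorSystem

variable {V E : Type} [Fintype V] [DecidableEq V] [Fintype E] [DecidableEq E]
variable (S : RotorSystem V E)

noncomputable def prev (e : E) : E := (Equiv.ofBijective S.next S.next_bijective).symm e

@[simp] lemma next_prev (e : E) : S.next (S.prev e) = e :=
  (Equiv.ofBijective S.next S.next_bijective).apply_symm_apply e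

lemma src_prev (e : E) : S.src (S.prev e) = S.src e := by
  rw [← S.next_src, next_prev]

lemma next_iterate_injective (k : ℕ) : Injective S.next^[k] :=
  S.next_bijective.1.iterate k

lemma eq_next_iterate_of_next_iterate_eq {e₁ e₂ : E} {a b : ℕ} (hba : b ≤ a)
    (h : S.next^[a] e₁ = S.next^[b] e₂) : e₂ = S.next^[a - b] e₁ :=
  S.next_iterate_injective b <| by rw [← h, ← iterate_add_apply, Nat.add_sub_cancel' hba]

section Walk

variable {S}

lemma step_of_mem {p : V × S.RConf} (h : p.1 ∈ S.T) : S.step p = p := by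
  simp [step, h]

lemma step_fst {p : V × S.RConf} (h : p.1 ∉ S.T) :
    (S.step p).1 = S.head (S.next (p.2.1 ⟨p.1, h⟩)) := by
  simp [step, h]

lemma step_snd {p : V × S.RConf} (h : p.1 ∉ S.T) (u : S.V0) :
    (S.step p).2.1 u = if u = ⟨p.1, h⟩ then S.next (p.2.1 ⟨p.1, h⟩) else p.2.1 u := by
  simp only [step, h, dif_neg, not_false_iff]
  exact update_apply _ _ _ _

lemma iterate_step_eq_of_mem {s : V × S.RConf} {m n : ℕ} (hm : (S.step^[m] s).1 ∈ S.T)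
    (hmn : m ≤ n) : S.step^[n] s = S.step^[m] s := by
  rw [← Nat.sub_add_cancel hmn, iterate_add_apply]
  exact iterate_fixed (step_of_mem hm) _

lemma fst_iterate_step_mem_of_le {s : V × S.RConf} {m n : ℕ} (hm : (S.step^[m] s).1 ∈ S.T)
    (hmn : m ≤ n) : (S.step^[n] s).1 ∈ S.T := by
  rwa [iterate_step_eq_of_mem hm hmn]

variable (S) in
def visitCount (s : V × S.RConf) (x : V) (n : ℕ) : ℕ :=
  ((Finset.range n).filter fun i => (S.step^[i] s).1 = x).card

@[simp] lemma visitCount_zero (s : V × S.RConf) (x : V) : S.visitCount s x 0 = 0 := by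
  simp [visitCount]

lemma visitCount_succ (s : V × S.RConf) (x : V) (n : ℕ) :
    S.visitCount s x (n + 1) =
      S.visitCount s x n + if (S.step^[n] s).1 = x then 1 else 0 := by
  simp only [visitCount, Finset.range_add_one, Finset.filter_insert]
  split_ifs <;> simp [Finset.card_insert_of_notMem]

lemma visitCount_eq_of_forall_ne {s : V × S.RConf} {x : V} {a b : ℕ} (hab : a ≤ b)
    (h : ∀ i, a ≤ i → i < b → (S.step^[i] s).1 ≠ x) :
    S.visitCount s x b = S.visitCount s x a := by
  induction b, hab using Nat.le_induction with
  | base => rfl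
  | succ b hab ih =>
    rw [visitCount_succ, if_neg (h b hab b.lt_succ_self), add_zero]
    exact ih fun i hi hib => h i hi (by omega)

lemma rotor_iterate_step (s : V × S.RConf) (u : S.V0) (n : ℕ) :
    (S.step^[n] s).2.1 u = S.next^[S.visitCount s u n] (s.2.1 u) := by
  induction n with
  | zero => simp
  | succ n ih =>
    rw [iterate_succ_apply', visitCount_succ]
    by_cases hT : (S.step^[n] s).1 ∈ S.T
    · have hne : (S.step^[n] s).1 ≠ u.1 := fun h => u.2 (h ▸ hT)
      rw [step_of_mem hT, ih, if_neg hne, add_zero]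
    · rw [step_snd hT]
      by_cases hu : u = ⟨_, hT⟩
      · rw [if_pos hu, if_pos (congrArg Subtype.val hu).symm, ← hu, ih,
          ← iterate_succ_apply' S.next]
      · rw [if_neg hu, if_neg fun h => hu (Subtype.ext h.symm), ih, add_zero]

lemma rotor_iterate_step_eq_of_forall_ne {s : V × S.RConf} {u : S.V0} {a b : ℕ} (hab : a ≤ b)
    (h : ∀ i, a ≤ i → i < b → (S.step^[i] s).1 ≠ u.1) :
    (S.step^[b] s).2.1 u = (S.step^[a] s).2.1 u := by
  rw [rotor_iterate_step, rotor_iterate_step, visitCount_eq_of_forall_ne hab h]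

lemma fst_iterate_succ_step {s : V × S.RConf} {n : ℕ} {u : S.V0}
    (hn : (S.step^[n] s).1 = u.1) :
    (S.step^[n + 1] s).1 = S.head (S.next ((S.step^[n] s).2.1 u)) := by
  have hT : (S.step^[n] s).1 ∉ S.T := hn ▸ u.2
  rw [iterate_succ_apply', step_fst hT, show (⟨_, hT⟩ : S.V0) = u from Subtype.ext hn]

lemma rotor_iterate_succ_step {s : V × S.RConf} {n : ℕ} {u : S.V0}
    (hn : (S.step^[n] s).1 = u.1) (v : S.V0) :
    (S.step^[n + 1] s).2.1 v =
      if v = u then S.next ((S.step^[n] s).2.1 u) else (S.step^[n] s).2.1 v := by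
  have hT : (S.step^[n] s).1 ∉ S.T := hn ▸ u.2
  obtain rfl : u = ⟨_, hT⟩ := Subtype.ext hn.symm
  rw [iterate_succ_apply', step_snd hT]

end Walk

section Termination

variable {S} {s : V × S.RConf}

lemma exists_next_visit {u : S.V0} (hu : ∃ᶠ n in atTop, (S.step^[n] s).1 = u.1) {k : ℕ}
    (hk : (S.step^[k] s).1 = u.1) :
    ∃ k' > k, (S.step^[k'] s).1 = u.1 ∧
      (S.step^[k'] s).2.1 u = S.next ((S.step^[k] s).2.1 u) := by
  classical
  have hex : ∃ m, (S.step^[k + 1 + m] s).1 = u.1 := by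
    obtain ⟨b, hb, hbu⟩ := frequently_atTop.1 hu (k + 1)
    exact ⟨b - (k + 1), by rwa [Nat.add_sub_cancel' hb]⟩
  refine ⟨k + 1 + Nat.find hex, by omega, Nat.find_spec hex, ?_⟩
  rw [rotor_iterate_step_eq_of_forall_ne (a := k + 1) (by omega), rotor_iterate_succ_step hk,
    if_pos rfl]
  intro i hi hik
  have := Nat.find_min hex (m := i - (k + 1)) (by omega)
  rwa [Nat.add_sub_cancel' hi] at this

lemma exists_visit_rotor_eq {u : S.V0} (hu : ∃ᶠ n in atTop, (S.step^[n] s).1 = u.1) {k : ℕ}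
    (hk : (S.step^[k] s).1 = u.1) (m : ℕ) :
    ∃ k' ≥ k, (S.step^[k'] s).1 = u.1 ∧
      (S.step^[k'] s).2.1 u = S.next^[m] ((S.step^[k] s).2.1 u) := by
  induction m with
  | zero => exact ⟨k, le_rfl, hk, rfl⟩
  | succ m ih =>
    obtain ⟨k₁, hk₁, hu₁, hr₁⟩ := ih
    obtain ⟨k₂, hk₂, hu₂, hr₂⟩ := exists_next_visit hu hu₁
    exact ⟨k₂, by omega, hu₂, by rw [hr₂, hr₁, iterate_succ_apply']⟩

lemma frequently_visit_head {x : V} (hxT : x ∉ S.T)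
    (hx : ∃ᶠ n in atTop, (S.step^[n] s).1 = x) {e : E} (he : S.src e = x) :
    ∃ᶠ n in atTop, (S.step^[n] s).1 = S.head e := by
  set u : S.V0 := ⟨x, hxT⟩
  -- between visits the rotor of `x` reaches `prev e`, and the next departure is along `e`
  refine frequently_atTop.2 fun a => ?_
  obtain ⟨k, hka, hk⟩ := frequently_atTop.1 hx a
  obtain ⟨m, hm⟩ := S.next_cyclic ((S.step^[k] s).2.1 u) (S.prev e)
    (by rw [(S.step^[k] s).2.2 u, S.src_prev, he])
  obtain ⟨k', hk', hu', hr'⟩ := exists_visit_rotor_eq (u := u) hx hk m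
  refine ⟨k' + 1, by omega, ?_⟩
  rw [fst_iterate_succ_step hu', hr', hm, next_prev]

variable (S) in
theorem exists_iterate_step_mem (s : V × S.RConf) : ∃ n, (S.step^[n] s).1 ∈ S.T := by
  by_contra! hs
  obtain ⟨x, hx⟩ := Finite.exists_infinite_fiber fun n => (S.step^[n] s).1
  have hx : ∃ᶠ n in atTop, (S.step^[n] s).1 = x :=
    Nat.frequently_atTop_iff_infinite.2 (Set.infinite_coe_iff.1 hx)
  -- the vertices visited infinitely often are closed under arcs, so they include a target
  have hreach (y : V)
      (hxy : Relation.ReflTransGen (fun a b => ∃ e, S.src e = a ∧ S.head e = b) x y) :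
      ∃ᶠ n in atTop, (S.step^[n] s).1 = y := by
    induction hxy with
    | refl => exact hx
    | tail _ hab ih =>
      obtain ⟨e, rfl, rfl⟩ := hab
      obtain ⟨n, hn⟩ := ih.exists
      exact frequently_visit_head (hn ▸ hs n) ih rfl
  obtain ⟨t, ht⟩ := S.T_nonempty
  obtain ⟨n, hn⟩ := (hreach t (S.strongly_connected x t)).exists
  exact hs n (hn ▸ ht)

end Termination

section Run

open Classical in
noncomputable def hitTime (s : V × S.RConf) : ℕ := Nat.find (S.exists_iterate_step_mem s)

noncomputable def run (s : V × S.RConf) : V × S.RConf := S.step^[S.hitTime s] s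

variable {S}

lemma fst_run_mem (s : V × S.RConf) : (S.run s).1 ∈ S.T := by
  classical
  exact Nat.find_spec (S.exists_iterate_step_mem s)

lemma hitTime_le_iff {s : V × S.RConf} {n : ℕ} :
    S.hitTime s ≤ n ↔ (S.step^[n] s).1 ∈ S.T := by
  classical
  exact ⟨fun h => fst_iterate_step_mem_of_le (fst_run_mem s) h, fun h => Nat.find_min' _ h⟩

lemma run_eq_iterate {s : V × S.RConf} {n : ℕ} (hn : (S.step^[n] s).1 ∈ S.T) :
    S.run s = S.step^[n] s :=
  (iterate_step_eq_of_mem (fst_run_mem s) (hitTime_le_iff.2 hn)).symm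

lemma run_iterate_step (s : V × S.RConf) (n : ℕ) : S.run (S.step^[n] s) = S.run s := by
  have h := fst_run_mem (S.step^[n] s)
  rw [run, ← iterate_add_apply] at h ⊢
  exact (run_eq_iterate h).symm

lemma hitTime_le_add (s : V × S.RConf) (a : ℕ) : S.hitTime s ≤ a + S.hitTime (S.step^[a] s) :=
  hitTime_le_iff.2 <| by rw [add_comm, iterate_add_apply]; exact fst_run_mem _

lemma hitTime_eq_add {s : V × S.RConf} {a : ℕ} (h : ∀ i < a, (S.step^[i] s).1 ∉ S.T) :
    S.hitTime s = a + S.hitTime (S.step^[a] s) := by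
  have ha : a ≤ S.hitTime s := not_lt.1 fun hlt => h _ hlt (fst_run_mem s)
  have hle : S.hitTime (S.step^[a] s) ≤ S.hitTime s - a := hitTime_le_iff.2 <| by
    rw [← iterate_add_apply, Nat.sub_add_cancel ha]; exact fst_run_mem s
  have := hitTime_le_add s a
  omega

lemma addAt_eq_run (v : S.V0) (ρ : S.RConf) : S.addAt v ρ = (S.run (v.1, ρ)).2 := by
  rw [addAt, route, dif_pos (S.exists_iterate_step_mem _)]
  rfl

end Run

section Acyclic

variable {S}

/-- After the walk, the rotor of every visited vertex points to the position right after its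
last departure, which is visited later; unvisited rotors are unchanged. -/
theorem isAcyclicConf_run {s : V × S.RConf} (hac : S.IsAcyclicConf s.2) :
    S.IsAcyclicConf (S.run s).2 := by
  classical
  set N := S.hitTime s
  let lastVisit (a : V) : ℕ := Nat.findGreatest (fun i => (S.step^[i] s).1 = a) N
  refine Relation.not_transGen_self_of_rank_lt (U := fun a => ∀ i ≤ N, (S.step^[i] s).1 ≠ a)
    (rank := lastVisit) ?_ ?_ hac
  · rintro a b ⟨ha, rfl⟩ hU
    refine ⟨ha, ?_⟩
    rw [run, rotor_iterate_step_eq_of_forall_ne (u := ⟨a, ha⟩) (Nat.zero_le N)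
      fun i _ hi => hU i hi.le]
    rfl
  · rintro a b ⟨ha, rfl⟩ hU
    push Not at hU
    obtain ⟨i, hiN, hia⟩ := hU
    have hl : (S.step^[lastVisit a] s).1 = a :=
      Nat.findGreatest_spec (P := fun i => (S.step^[i] s).1 = a) hiN hia
    have hlN : lastVisit a < N := lt_of_le_of_ne (Nat.findGreatest_le N) fun h =>
      ha (hl ▸ h ▸ fst_run_mem s)
    have hrot : (S.run s).2.1 ⟨a, ha⟩ = (S.step^[lastVisit a + 1] s).2.1 ⟨a, ha⟩ :=
      rotor_iterate_step_eq_of_forall_ne hlN fun j hj hjN =>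
        Nat.findGreatest_is_greatest (P := fun i => (S.step^[i] s).1 = a) hj hjN.le
    have hnext : (S.step^[lastVisit a + 1] s).1 = S.head ((S.run s).2.1 ⟨a, ha⟩) := by
      rw [hrot, rotor_iterate_succ_step (u := ⟨a, ha⟩) hl, if_pos rfl,
        fst_iterate_succ_step (u := ⟨a, ha⟩) hl]
    exact ⟨fun hU => hU _ hlN hnext, Nat.lt_of_succ_le (Nat.le_findGreatest hlN hnext)⟩

end Acyclic

section Injectivity

-- the arrivals at `x` caused by `d` departures from a vertex whose rotor starts at `e`
def headCount (e : E) (d : ℕ) (x : V) : ℕ :=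
  ((Finset.Icc 1 d).filter fun j => S.head (S.next^[j] e) = x).card

lemma headCount_succ (e : E) (d : ℕ) (x : V) :
    S.headCount e (d + 1) x =
      S.headCount e d x + if S.head (S.next^[d + 1] e) = x then 1 else 0 := by
  rw [headCount, ← Finset.insert_Icc_right_eq_Icc_add_one (by omega), Finset.filter_insert]
  split_ifs <;> simp [headCount, Finset.card_insert_of_notMem]

lemma headCount_add (e : E) (a b : ℕ) (x : V) :
    S.headCount e (a + b) x = S.headCount e a x + S.headCount (S.next^[a] e) b x := by
  induction b with
  | zero => simp [headCount]
  | succ b ih =>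
    rw [← add_assoc, S.headCount_succ, ih, S.headCount_succ, ← iterate_add_apply, add_assoc,
      add_comm (b + 1), add_assoc]

lemma sum_headCount (e : E) (d : ℕ) : ∑ x, S.headCount e d x = d := by
  induction d with
  | zero => simp [headCount]
  | succ d ih =>
    simp only [S.headCount_succ, Finset.sum_add_distrib, ih, Finset.sum_ite_eq, Finset.mem_univ,
      if_true]

lemma headCount_pos {d : ℕ} (hd : 0 < d) (e : E) :
    0 < S.headCount e d (S.head (S.next^[d] e)) :=
  Finset.card_pos.2 ⟨d, Finset.mem_filter.2 ⟨Finset.mem_Icc.2 ⟨hd, le_rfl⟩, rfl⟩⟩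

lemma headCount_le_add_ite {e₁ e₂ : E} {k₁ k₂ : ℕ} (hend : S.next^[k₁] e₁ = S.next^[k₂] e₂)
    (x : V) : S.headCount e₁ k₁ x ≤
      S.headCount e₂ k₂ x + if k₂ < k₁ then S.headCount e₁ (k₁ - k₂) x else 0 := by
  rcases lt_or_ge k₂ k₁ with h | h
  · have := S.headCount_add e₁ (k₁ - k₂) k₂ x
    rw [Nat.sub_add_cancel h.le, ← S.eq_next_iterate_of_next_iterate_eq h.le hend] at this
    rw [if_pos h]
    omega
  · have := S.headCount_add e₂ (k₂ - k₁) k₁ x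
    rw [Nat.sub_add_cancel h, ← S.eq_next_iterate_of_next_iterate_eq h hend.symm] at this
    rw [if_neg h.not_gt]
    omega

/-- Summing two conservation laws with the same sources over the set where the first flow
departs more often: its excess is carried by arcs of extra departures that stay in the set. -/
lemma sum_sub_le_sum_headCount {e₁ e₂ : S.V0 → E} {k₁ k₂ c : S.V0 → ℕ}
    (hflow₁ : ∀ u : S.V0, k₁ u = c u + ∑ v, S.headCount (e₁ v) (k₁ v) u)
    (hflow₂ : ∀ u : S.V0, k₂ u = c u + ∑ v, S.headCount (e₂ v) (k₂ v) u)
    (hend : ∀ v, S.next^[k₁ v] (e₁ v) = S.next^[k₂ v] (e₂ v)) :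
    ∑ v ∈ {v | k₂ v < k₁ v}, (k₁ v - k₂ v) ≤
      ∑ v ∈ {v | k₂ v < k₁ v}, ∑ u ∈ {u | k₂ u < k₁ u}, S.headCount (e₁ v) (k₁ v - k₂ v) u := by
  set A : Finset S.V0 := {v | k₂ v < k₁ v}
  have h₁ : ∑ u ∈ A, k₁ u = ∑ u ∈ A, k₂ u + ∑ u ∈ A, (k₁ u - k₂ u) := by
    rw [← Finset.sum_add_distrib]
    exact Finset.sum_congr rfl fun u hu => by simp [A] at hu; omega
  have h₂ : ∑ u ∈ A, k₁ u ≤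
      ∑ u ∈ A, k₂ u + ∑ v ∈ A, ∑ u ∈ A, S.headCount (e₁ v) (k₁ v - k₂ v) u := calc
    ∑ u ∈ A, k₁ u = ∑ u ∈ A, (c u + ∑ v, S.headCount (e₁ v) (k₁ v) u) :=
      Finset.sum_congr rfl fun u _ => hflow₁ u
    _ ≤ ∑ u ∈ A, (c u + ∑ v, (S.headCount (e₂ v) (k₂ v) u +
          if k₂ v < k₁ v then S.headCount (e₁ v) (k₁ v - k₂ v) u else 0)) := by
      gcongr with u _ v
      exact S.headCount_le_add_ite (hend v) u
    _ = ∑ u ∈ A, (c u + ∑ v, S.headCount (e₂ v) (k₂ v) u) + ∑ u ∈ A, ∑ v,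
          (if k₂ v < k₁ v then S.headCount (e₁ v) (k₁ v - k₂ v) u else 0) := by
      simp only [Finset.sum_add_distrib, add_assoc]
    _ = ∑ u ∈ A, k₂ u + ∑ v ∈ A, ∑ u ∈ A, S.headCount (e₁ v) (k₁ v - k₂ v) u := by
      rw [Finset.sum_comm (s := A)]
      simp only [Finset.sum_ite_irrel, Finset.sum_const_zero, ← Finset.sum_filter]
      rw [Finset.sum_congr rfl fun u _ => (hflow₂ u).symm]
  omega

/-- Where the first flow departs `D > 0` more often, equality must hold in
`sum_sub_le_sum_headCount`, so all its last `D` departures lead back into the excess set; the last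
of them is along `e₂ v`. -/
lemma exists_excess_head {e₁ e₂ : S.V0 → E} {k₁ k₂ c : S.V0 → ℕ}
    (hflow₁ : ∀ u : S.V0, k₁ u = c u + ∑ v, S.headCount (e₁ v) (k₁ v) u)
    (hflow₂ : ∀ u : S.V0, k₂ u = c u + ∑ v, S.headCount (e₂ v) (k₂ v) u)
    (hend : ∀ v, S.next^[k₁ v] (e₁ v) = S.next^[k₂ v] (e₂ v)) {v : S.V0} (hv : k₂ v < k₁ v) :
    ∃ u : S.V0, k₂ u < k₁ u ∧ S.head (e₂ v) = u.1 := by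
  set A : Finset S.V0 := {v | k₂ v < k₁ v}
  have hA (f : V → ℕ) : ∑ u ∈ A, f u.1 = ∑ x ∈ A.map (Embedding.subtype _), f x :=
    (Finset.sum_map A (Embedding.subtype _) f).symm
  have hle : ∀ v ∈ A, ∑ u ∈ A, S.headCount (e₁ v) (k₁ v - k₂ v) u ≤ k₁ v - k₂ v := fun v _ =>
    (hA _).trans_le <| (Finset.sum_le_sum_of_subset (Finset.subset_univ _)).trans_eq <|
      S.sum_headCount _ _
  have heq := (Finset.sum_eq_sum_iff_of_le hle).1
    (le_antisymm (Finset.sum_le_sum hle) (S.sum_sub_le_sum_headCount hflow₁ hflow₂ hend)) v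
    (by simp [A, hv])
  by_contra! hout
  refine heq.not_lt <| (hA _).trans_lt <| (Finset.sum_lt_sum_of_subset (Finset.subset_univ _)
    (Finset.mem_univ (S.head (e₂ v))) ?_ ?_ fun _ _ _ => Nat.zero_le _).trans_eq <|
      S.sum_headCount _ _
  · simp only [Finset.mem_map, Embedding.subtype_apply, not_exists, not_and]
    intro u hu h
    exact hout u (by simpa [A] using hu) h.symm
  · rw [S.eq_next_iterate_of_next_iterate_eq hv.le (hend v)]
    exact S.headCount_pos (by omega) _

variable {S}

/-- Flow conservation along the walk. -/
lemma visitCount_add_ite (s : V × S.RConf) (u : S.V0) (n : ℕ) :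
    S.visitCount s u n + (if (S.step^[n] s).1 = u.1 then 1 else 0) =
      (if s.1 = u.1 then 1 else 0) +
        ∑ v : S.V0, S.headCount (s.2.1 v) (S.visitCount s v n) u := by
  induction n with
  | zero =>
    rw [iterate_zero_apply]
    simp [headCount]
  | succ n ih =>
    by_cases hT : (S.step^[n] s).1 ∈ S.T
    · have hne (v : S.V0) : (S.step^[n] s).1 ≠ v.1 := fun h => v.2 (h ▸ hT)
      simp only [visitCount_succ, if_neg (hne _), add_zero] at ih ⊢
      rwa [iterate_succ_apply', step_of_mem hT, if_neg (hne u), add_zero]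
    · set y : S.V0 := ⟨_, hT⟩
      have hv (v : S.V0) : S.headCount (s.2.1 v) (S.visitCount s v (n + 1)) u =
          S.headCount (s.2.1 v) (S.visitCount s v n) u +
            if v = y then (if (S.step^[n + 1] s).1 = u.1 then 1 else 0) else 0 := by
        rw [visitCount_succ]
        by_cases hvy : v = y
        · have hpos : (S.step^[n] s).1 = v.1 := by rw [hvy]
          rw [if_pos hpos, if_pos hvy, S.headCount_succ, fst_iterate_succ_step hpos,
            rotor_iterate_step, ← iterate_succ_apply' S.next]
        · rw [if_neg fun h => hvy (Subtype.ext h.symm), if_neg hvy, add_zero, add_zero]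
      rw [Finset.sum_congr rfl fun v _ => hv v, Finset.sum_add_distrib, Finset.sum_ite_eq',
        if_pos (Finset.mem_univ _), ← add_assoc, ← ih, visitCount_succ]

variable (S) in
noncomputable def departures (s : V × S.RConf) (x : V) : ℕ := S.visitCount s x (S.hitTime s)

lemma departures_eq (s : V × S.RConf) (u : S.V0) :
    S.departures s u =
      (if s.1 = u.1 then 1 else 0) + ∑ v : S.V0, S.headCount (s.2.1 v) (S.departures s v) u := by
  have hne : (S.step^[S.hitTime s] s).1 ≠ u.1 := fun h => u.2 (h ▸ fst_run_mem _)
  have h := visitCount_add_ite s u (S.hitTime s)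
  rw [if_neg hne, add_zero] at h
  exact h

lemma next_iterate_departures (s : V × S.RConf) (v : S.V0) :
    S.next^[S.departures s v] (s.2.1 v) = (S.run s).2.1 v :=
  (rotor_iterate_step s v _).symm

lemma departures_le_of_run_eq {w : V} {ρ₁ ρ₂ : S.RConf} (hac : S.IsAcyclicConf ρ₂)
    (h : (S.run (w, ρ₁)).2 = (S.run (w, ρ₂)).2) (u : S.V0) :
    S.departures (w, ρ₁) u ≤ S.departures (w, ρ₂) u := by
  by_contra! hu
  have hend (v : S.V0) :
      S.next^[S.departures (w, ρ₁) v] (ρ₁.1 v) = S.next^[S.departures (w, ρ₂) v] (ρ₂.1 v) := by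
    rw [next_iterate_departures (w, ρ₁), next_iterate_departures (w, ρ₂), h]
  obtain ⟨x, hx⟩ := Relation.exists_transGen_self_of_forall_exists
    (R := fun a b : S.V0 => S.head (ρ₂.1 a) = b.1) hu fun v hv =>
      S.exists_excess_head (departures_eq (w, ρ₁)) (departures_eq (w, ρ₂)) hend hv
  exact hac x.1 (hx.lift Subtype.val fun a _ hab => ⟨a.2, hab⟩)

theorem injOn_run (w : V) : Set.InjOn (fun ρ => (S.run (w, ρ)).2) {ρ | S.IsAcyclicConf ρ} := by
  intro ρ₁ h₁ ρ₂ h₂ h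
  ext v : 2
  have hk : S.departures (w, ρ₁) v = S.departures (w, ρ₂) v :=
    le_antisymm (departures_le_of_run_eq h₂ h v) (departures_le_of_run_eq h₁ h.symm v)
  apply S.next_iterate_injective (S.departures (w, ρ₁) v)
  dsimp only at h
  rw [next_iterate_departures (w, ρ₁), hk, next_iterate_departures (w, ρ₂), h]

end Injectivity

section CyclePush

variable {S} {r : ℕ} {f : ZMod r → S.V0} {ρ ρ' : S.RConf}

variable (S) in
def IsCyclePushAlong (f : ZMod r → S.V0) (ρ ρ' : S.RConf) : Prop :=
  Injective f ∧ (∀ j, S.head (ρ.1 (f j)) = (f (j + 1)).1) ∧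
    (∀ j, S.next (ρ'.1 (f j)) = ρ.1 (f j)) ∧ (∀ v, v ∉ Set.range f → ρ'.1 v = ρ.1 v)

lemma isCyclePush_iff : S.IsCyclePush ρ ρ' ↔ ∃ r, 0 < r ∧ ∃ f : ZMod r → S.V0,
    S.IsCyclePushAlong f ρ ρ' :=
  Iff.rfl

lemma IsCyclePushAlong.step (hf : S.IsCyclePushAlong f ρ ρ') {x : V} (hx : ∀ j, x ≠ (f j).1) :
    (S.step (x, ρ')).1 = (S.step (x, ρ)).1 ∧
      S.IsCyclePushAlong f (S.step (x, ρ)).2 (S.step (x, ρ')).2 := by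
  obtain ⟨hinj, hhead, hnext, hoff⟩ := hf
  by_cases hT : x ∈ S.T
  · rw [step_of_mem (p := (x, ρ)) hT, step_of_mem (p := (x, ρ')) hT]
    exact ⟨rfl, hinj, hhead, hnext, hoff⟩
  have hy : (⟨x, hT⟩ : S.V0) ∉ Set.range f := fun ⟨j, hj⟩ =>
    hx j (congrArg Subtype.val hj).symm
  have hfy (j : ZMod r) : f j ≠ ⟨x, hT⟩ := fun h => hy ⟨j, h⟩
  refine ⟨by rw [step_fst (p := (x, ρ')) hT, step_fst (p := (x, ρ)) hT, hoff _ hy],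
    hinj, fun j => ?_, fun j => ?_, fun v hv => ?_⟩
  · rw [step_snd (p := (x, ρ)) hT, if_neg (hfy j), hhead]
  · rw [step_snd (p := (x, ρ)) hT, step_snd (p := (x, ρ')) hT, if_neg (hfy j), if_neg (hfy j),
      hnext]
  · rw [step_snd (p := (x, ρ)) hT, step_snd (p := (x, ρ')) hT, hoff _ hy, hoff v hv]

lemma IsCyclePushAlong.iterate_step (hf : S.IsCyclePushAlong f ρ ρ') {w : V} {n : ℕ}
    (hn : ∀ i < n, ∀ j, (S.step^[i] (w, ρ)).1 ≠ (f j).1) :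
    (S.step^[n] (w, ρ')).1 = (S.step^[n] (w, ρ)).1 ∧
      S.IsCyclePushAlong f (S.step^[n] (w, ρ)).2 (S.step^[n] (w, ρ')).2 := by
  induction n with
  | zero => exact ⟨rfl, hf⟩
  | succ n ih =>
    obtain ⟨hpos, hpush⟩ := ih fun i hi => hn i (by omega)
    have h' : S.step^[n] (w, ρ') = ((S.step^[n] (w, ρ)).1, (S.step^[n] (w, ρ')).2) :=
      Prod.ext hpos rfl
    rw [iterate_succ_apply', iterate_succ_apply', h']
    exact hpush.step (hn n n.lt_succ_self)

lemma IsCyclePushAlong.iterate_step_cycle (hf : S.IsCyclePushAlong f ρ ρ')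
    (j : ZMod r) {i : ℕ} (hi : i ≤ r) :
    (S.step^[i] ((f j).1, ρ')).1 = (f (j + i)).1 ∧ ∀ u,
      (S.step^[i] ((f j).1, ρ')).2.1 u = if ∃ l < i, f (j + l) = u then ρ.1 u else ρ'.1 u := by
  obtain ⟨hinj, hhead, hnext, -⟩ := hf
  induction i with
  | zero => simp
  | succ i ih =>
    obtain ⟨hpos, hrot⟩ := ih (by omega)
    have hnew : ¬ ∃ l < i, f (j + l) = f (j + i) := by
      rintro ⟨l, hl, hfl⟩
      have := (ZMod.natCast_eq_natCast_iff' l i r).1 (add_left_cancel (hinj hfl))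
      rw [Nat.mod_eq_of_lt (by omega), Nat.mod_eq_of_lt (by omega)] at this
      omega
    have hcur : (S.step^[i] ((f j).1, ρ')).2.1 (f (j + i)) = ρ'.1 (f (j + i)) := by
      rw [hrot, if_neg hnew]
    constructor
    · rw [fst_iterate_succ_step hpos, hcur, hnext, hhead, Nat.cast_succ, add_assoc]
    · intro u
      rw [rotor_iterate_succ_step hpos u, hcur, hnext]
      by_cases hu : u = f (j + i)
      · rw [if_pos hu, if_pos ⟨i, i.lt_succ_self, hu.symm⟩, hu]
      · have hlt : (∃ l < i + 1, f (j + l) = u) ↔ ∃ l < i, f (j + l) = u :=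
          ⟨fun ⟨l, hl, h⟩ => ⟨l, lt_of_le_of_ne (Nat.lt_succ_iff.1 hl) fun hli => hu (hli ▸ h).symm,
            h⟩, fun ⟨l, hl, h⟩ => ⟨l, by omega, h⟩⟩
        simp only [if_neg hu, hrot, hlt]

lemma IsCyclePushAlong.iterate_step_cycle_self (hr : 0 < r) (hf : S.IsCyclePushAlong f ρ ρ')
    (j : ZMod r) : S.step^[r] ((f j).1, ρ') = ((f j).1, ρ) := by
  have : NeZero r := ⟨hr.ne'⟩
  obtain ⟨hpos, hrot⟩ := hf.iterate_step_cycle j le_rfl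
  refine Prod.ext (by rw [hpos, ZMod.natCast_self, add_zero]) (Subtype.ext (funext fun u => ?_))
  rw [hrot]
  split_ifs with h
  · rfl
  · refine hf.2.2.2 u fun ⟨k, hk⟩ => h ⟨(k - j).val, ZMod.val_lt _, ?_⟩
    rw [ZMod.natCast_zmod_val, add_sub_cancel, hk]

lemma IsCyclePushAlong.run_eq_of_visit (hr : 0 < r) (hf : S.IsCyclePushAlong f ρ ρ') {w : V}
    {m : ℕ} {j : ZMod r} (hm : (S.step^[m] (w, ρ)).1 = (f j).1)
    (hmin : ∀ i < m, ∀ j, (S.step^[i] (w, ρ)).1 ≠ (f j).1) :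
    S.run (w, ρ') = S.run (w, ρ) ∧ S.hitTime (w, ρ) < S.hitTime (w, ρ') := by
  obtain ⟨hpos, hpush⟩ := hf.iterate_step hmin
  have hstate : S.step^[m] (w, ρ') = ((f j).1, (S.step^[m] (w, ρ')).2) :=
    Prod.ext (hpos.trans hm) rfl
  have hmerge : S.step^[m + r] (w, ρ') = S.step^[m] (w, ρ) := by
    rw [add_comm, iterate_add_apply, hstate, hpush.iterate_step_cycle_self hr j]
    exact Prod.ext hm.symm rfl
  have hoff : ∀ i < m + r, (S.step^[i] (w, ρ')).1 ∉ S.T := by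
    intro i hi
    rcases lt_or_ge i m with him | him
    · rw [(hf.iterate_step fun k hk => hmin k (hk.trans him)).1]
      exact fun hT => (f j).2 (hm ▸ fst_iterate_step_mem_of_le hT him.le)
    · obtain ⟨d, rfl⟩ := Nat.exists_eq_add_of_le him
      rw [add_comm, iterate_add_apply, hstate, (hpush.iterate_step_cycle j (by omega)).1]
      exact (f _).2
  refine ⟨by rw [← run_iterate_step (w, ρ') (m + r), hmerge, run_iterate_step], ?_⟩
  have h₁ := hitTime_eq_add hoff
  have h₂ := hitTime_le_add (w, ρ) m
  rw [hmerge] at h₁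
  omega

lemma IsCyclePushAlong.run_of_forall_ne (hf : S.IsCyclePushAlong f ρ ρ') {w : V}
    (h : ∀ n j, (S.step^[n] (w, ρ)).1 ≠ (f j).1) :
    S.hitTime (w, ρ') = S.hitTime (w, ρ) ∧
      S.IsCyclePushAlong f (S.run (w, ρ)).2 (S.run (w, ρ')).2 := by
  have hpar (n : ℕ) := hf.iterate_step (n := n) fun i _ => h i
  have hhit : S.hitTime (w, ρ') = S.hitTime (w, ρ) :=
    le_antisymm (hitTime_le_iff.2 ((hpar _).1 ▸ fst_run_mem _))
      (hitTime_le_iff.2 ((hpar _).1.symm ▸ fst_run_mem _))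
  refine ⟨hhit, ?_⟩
  rw [run, run, hhit]
  exact (hpar _).2

theorem IsCyclePushAlong.run_cases (hr : 0 < r) (hf : S.IsCyclePushAlong f ρ ρ') (w : V) :
    (S.run (w, ρ') = S.run (w, ρ) ∧ S.hitTime (w, ρ) < S.hitTime (w, ρ')) ∨
      ((∀ j, w ≠ (f j).1) ∧ S.hitTime (w, ρ') = S.hitTime (w, ρ) ∧
        S.IsCyclePushAlong f (S.run (w, ρ)).2 (S.run (w, ρ')).2) := by
  classical
  by_cases hC : ∃ n j, (S.step^[n] (w, ρ)).1 = (f j).1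
  · obtain ⟨j, hj⟩ := Nat.find_spec hC
    exact .inl <| hf.run_eq_of_visit hr hj fun i hi j hij => Nat.find_min hC hi ⟨j, hij⟩
  · push Not at hC
    exact .inr ⟨hC 0, hf.run_of_forall_ne hC⟩

lemma IsCyclePushAlong.addAt (hr : 0 < r) (hf : S.IsCyclePushAlong f ρ ρ') (v : S.V0) :
    S.addAt v ρ' = S.addAt v ρ ∨ S.IsCyclePushAlong f (S.addAt v ρ) (S.addAt v ρ') := by
  simp only [addAt_eq_run]
  rcases hf.run_cases hr v.1 with ⟨h, -⟩ | ⟨-, -, h⟩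
  · exact .inl (congrArg Prod.snd h)
  · exact .inr h

lemma IsCyclePushAlong.addAt_eq (hr : 0 < r) (hf : S.IsCyclePushAlong f ρ ρ') (j : ZMod r) :
    S.addAt (f j) ρ' = S.addAt (f j) ρ := by
  simp only [addAt_eq_run]
  rcases hf.run_cases hr (f j).1 with ⟨h, -⟩ | ⟨h, -⟩
  · exact congrArg Prod.snd h
  · exact absurd rfl (h j)

end CyclePush

section Normalization

variable {S}

variable (S) in
noncomputable def totalHitTime (ρ : S.RConf) : ℕ := ∑ v : S.V0, S.hitTime (v.1, ρ)

lemma IsCyclePush.totalHitTime_lt {ρ ρ' : S.RConf} (h : S.IsCyclePush ρ ρ') :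
    S.totalHitTime ρ < S.totalHitTime ρ' := by
  obtain ⟨r, hr, f, hf⟩ := isCyclePush_iff.1 h
  refine Finset.sum_lt_sum (fun v _ => ?_) ⟨f 0, Finset.mem_univ _, ?_⟩
  · rcases hf.run_cases hr v.1 with ⟨-, h⟩ | ⟨-, h, -⟩ <;> omega
  · rcases hf.run_cases hr (f 0).1 with ⟨-, h⟩ | ⟨h, -⟩
    · exact h
    · exact absurd rfl (h 0)

open Classical in
variable (S) in
noncomputable def regress (ρ : S.RConf) (C : Set S.V0) : S.RConf :=
  ⟨fun v => if v ∈ C then S.prev (ρ.1 v) else ρ.1 v, fun v => by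
    dsimp only
    split_ifs
    · rw [src_prev, ρ.2 v]
    · exact ρ.2 v⟩

lemma isCyclePush_regress {ρ : S.RConf} {r : ℕ} (hr : 0 < r) {f : ZMod r → S.V0}
    (hinj : Injective f) (hhead : ∀ j, S.head (ρ.1 (f j)) = (f (j + 1)).1) :
    S.IsCyclePush ρ (S.regress ρ (Set.range f)) := by
  classical
  refine ⟨r, hr, f, hinj, hhead, fun j => ?_, fun v hv => if_neg hv⟩
  show S.next (if f j ∈ Set.range f then _ else _) = _
  rw [if_pos ⟨j, rfl⟩, next_prev]

noncomputable def rotorSucc (ρ : S.RConf) (x : V) : V :=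
  if h : x ∈ S.T then x else S.head (ρ.1 ⟨x, h⟩)

lemma exists_iterate_rotorSucc_of_transGen {ρ : S.RConf} {a b : V}
    (h : Relation.TransGen (S.rotorRel ρ) a b) :
    ∃ n > 0, (rotorSucc ρ)^[n] a = b ∧ ∀ i < n, (rotorSucc ρ)^[i] a ∉ S.T := by
  induction h with
  | single hab =>
    obtain ⟨ha, rfl⟩ := hab
    exact ⟨1, one_pos, by simp [rotorSucc, ha], fun i hi => by rwa [Nat.lt_one_iff.1 hi]⟩
  | tail _ hcb ih =>
    obtain ⟨n, hn, rfl, hT⟩ := ih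
    obtain ⟨hc, rfl⟩ := hcb
    refine ⟨n + 1, n.succ_pos, by simp [iterate_succ_apply', rotorSucc, hc], fun i hi => ?_⟩
    rcases Nat.lt_succ_iff_lt_or_eq.1 hi with hi | rfl
    · exact hT i hi
    · exact hc

theorem exists_cyclePush_of_not_isAcyclicConf {ρ : S.RConf} (h : ¬ S.IsAcyclicConf ρ) :
    ∃ ρ', S.IsCyclePush ρ ρ' := by
  simp only [IsAcyclicConf, not_forall, not_not] at h
  obtain ⟨v, hv⟩ := h
  obtain ⟨n, hn, hper, hT⟩ := exists_iterate_rotorSucc_of_transGen hv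
  set g := rotorSucc ρ
  have hper : IsPeriodicPt g n v := hper
  have hgT (i : ℕ) : g^[i] v ∉ S.T := by
    rw [← hper.iterate_mod_apply]
    exact hT _ (Nat.mod_lt _ hn)
  set m := minimalPeriod g v
  have : NeZero m := ⟨(hper.minimalPeriod_pos hn).ne'⟩
  let f : ZMod m → S.V0 := fun j => ⟨g^[j.val] v, hgT _⟩
  refine ⟨_, isCyclePush_regress (NeZero.pos m) (f := f) (fun i j hij => ?_) fun j => ?_⟩
  · exact ZMod.val_injective _ (iterate_injOn_Iio_minimalPeriod (ZMod.val_lt i) (ZMod.val_lt j)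
      (congrArg Subtype.val hij))
  · have hval : (j + 1).val = (j.val + 1) % m := by
      rw [← ZMod.val_natCast, Nat.cast_add, ZMod.natCast_zmod_val, Nat.cast_one]
    show S.head (ρ.1 ⟨g^[j.val] v, _⟩) = g^[(j + 1).val] v
    rw [hval, iterate_mod_minimalPeriod_eq, iterate_succ_apply']
    exact (dif_neg (hgT j.val) : rotorSucc ρ _ = _).symm

theorem exists_reflTransGen_cyclePush_isAcyclicConf (ρ : S.RConf) :
    ∃ ρ', Relation.ReflTransGen S.IsCyclePush ρ ρ' ∧ S.IsAcyclicConf ρ' := by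
  set M := Finset.univ.sup S.totalHitTime
  induction ρ using (measure fun ρ => M - S.totalHitTime ρ).wf.induction with
  | h ρ ih =>
    by_cases hac : S.IsAcyclicConf ρ
    · exact ⟨ρ, .refl, hac⟩
    obtain ⟨ρ', hρ'⟩ := exists_cyclePush_of_not_isAcyclicConf hac
    have hlt := hρ'.totalHitTime_lt
    have hle : S.totalHitTime ρ' ≤ M := Finset.le_sup (Finset.mem_univ ρ')
    obtain ⟨ρ'', h₁, h₂⟩ := ih ρ' (show M - S.totalHitTime ρ' < M - S.totalHitTime ρ by omega)
    exact ⟨ρ'', .head hρ' h₁, h₂⟩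

end Normalization

section Act

variable {S} {r : ℕ} {f : ZMod r → S.V0} {ρ ρ' : S.RConf}

variable (S) in
noncomputable def actList (σ : S.PConf) (L : List S.V0) (ρ : S.RConf) : S.RConf :=
  L.foldr (fun v ρ => (S.addAt v)^[σ v] ρ) ρ

lemma actList_cons (σ : S.PConf) (v : S.V0) (L : List S.V0) (ρ : S.RConf) :
    S.actList σ (v :: L) ρ = (S.addAt v)^[σ v] (S.actList σ L ρ) :=
  rfl

lemma act_eq_actList (σ : S.PConf) : S.act σ = S.actList σ (Finset.univ : Finset S.V0).toList :=
  rfl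

lemma IsCyclePushAlong.iterate_addAt (hr : 0 < r) (hf : S.IsCyclePushAlong f ρ ρ') (v : S.V0)
    (n : ℕ) : (S.addAt v)^[n] ρ' = (S.addAt v)^[n] ρ ∨
      S.IsCyclePushAlong f ((S.addAt v)^[n] ρ) ((S.addAt v)^[n] ρ') := by
  induction n with
  | zero => exact .inr hf
  | succ n ih =>
    simp only [iterate_succ_apply']
    rcases ih with h | h
    · exact .inl (by rw [h])
    · exact h.addAt hr v

lemma IsCyclePushAlong.actList (hr : 0 < r) (hf : S.IsCyclePushAlong f ρ ρ') (σ : S.PConf)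
    (L : List S.V0) : S.actList σ L ρ' = S.actList σ L ρ ∨
      S.IsCyclePushAlong f (S.actList σ L ρ) (S.actList σ L ρ') := by
  induction L with
  | nil => exact .inr hf
  | cons v L ih =>
    simp only [actList_cons]
    rcases ih with h | h
    · exact .inl (by rw [h])
    · exact h.iterate_addAt hr v _

lemma IsCyclePushAlong.actList_eq (hr : 0 < r) (hf : S.IsCyclePushAlong f ρ ρ') {σ : S.PConf}
    {L : List S.V0} {j : ZMod r} (hj : f j ∈ L) (hσ : 0 < σ (f j)) :
    S.actList σ L ρ' = S.actList σ L ρ := by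
  induction L with
  | nil => simp at hj
  | cons v L ih =>
    simp only [actList_cons]
    rcases List.mem_cons.1 hj with rfl | hj
    · rcases hf.actList hr σ L with h | h
      · rw [h]
      · rw [← Nat.succ_pred_eq_of_pos hσ, iterate_succ_apply, iterate_succ_apply,
          h.addAt_eq hr j]
    · rw [ih hj]

lemma IsCyclePush.act (h : S.IsCyclePush ρ ρ') (σ : S.PConf) :
    S.act σ ρ' = S.act σ ρ ∨ S.IsCyclePush (S.act σ ρ) (S.act σ ρ') := by
  obtain ⟨r, hr, f, hf⟩ := isCyclePush_iff.1 h
  exact (hf.actList hr σ _).imp_right fun h => ⟨r, hr, f, h⟩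

lemma IsCyclePush.act_eq (h : S.IsCyclePush ρ ρ') {σ : S.PConf} (hσ : ∀ v, 0 < σ v) :
    S.act σ ρ' = S.act σ ρ := by
  obtain ⟨r, hr, f, hf⟩ := isCyclePush_iff.1 h
  exact hf.actList_eq hr (j := 0) (Finset.mem_toList.2 (Finset.mem_univ _)) (hσ _)

lemma reflTransGen_cyclePush_act (h : Relation.ReflTransGen S.IsCyclePush ρ ρ') (σ : S.PConf) :
    Relation.ReflTransGen S.IsCyclePush (S.act σ ρ) (S.act σ ρ') := by
  induction h with
  | refl => exact .refl
  | tail _ hbc ih =>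
    rcases hbc.act σ with h | h
    · rwa [h]
    · exact ih.tail h

lemma act_eq_of_reflTransGen (h : Relation.ReflTransGen S.IsCyclePush ρ ρ') {σ : S.PConf}
    (hσ : ∀ v, 0 < σ v) : S.act σ ρ' = S.act σ ρ := by
  induction h with
  | refl => rfl
  | tail _ hbc ih => exact (hbc.act_eq hσ).trans ih

lemma mapsTo_addAt (v : S.V0) :
    Set.MapsTo (S.addAt v) {ρ | S.IsAcyclicConf ρ} {ρ | S.IsAcyclicConf ρ} := fun ρ h => by
  show S.IsAcyclicConf _
  rw [addAt_eq_run]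
  exact isAcyclicConf_run h

lemma injOn_addAt (v : S.V0) : Set.InjOn (S.addAt v) {ρ | S.IsAcyclicConf ρ} :=
  fun _ h₁ _ h₂ h => injOn_run v.1 h₁ h₂ (by simpa only [addAt_eq_run] using h)

lemma mapsTo_actList (σ : S.PConf) (L : List S.V0) :
    Set.MapsTo (S.actList σ L) {ρ | S.IsAcyclicConf ρ} {ρ | S.IsAcyclicConf ρ} := by
  induction L with
  | nil => exact Set.mapsTo_id _
  | cons v L ih => exact ((mapsTo_addAt v).iterate _).comp ih

lemma injOn_actList (σ : S.PConf) (L : List S.V0) :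
    Set.InjOn (S.actList σ L) {ρ | S.IsAcyclicConf ρ} := by
  induction L with
  | nil => exact Set.injOn_id _
  | cons v L ih =>
    exact ((injOn_addAt v).iterate (mapsTo_addAt v) _).comp ih (mapsTo_actList σ L)

lemma mapsTo_act (σ : S.PConf) :
    Set.MapsTo (S.act σ) {ρ | S.IsAcyclicConf ρ} {ρ | S.IsAcyclicConf ρ} := by
  rw [act_eq_actList]
  exact mapsTo_actList σ _

lemma injOn_act (σ : S.PConf) : Set.InjOn (S.act σ) {ρ | S.IsAcyclicConf ρ} := by
  rw [act_eq_actList]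
  exact injOn_actList σ _

end Act

end RotorSystem

/-- **Lemma (equivalence = common configuration accessible by cycle pushing).**
Two rotor configurations are equivalent if and only if some rotor configuration is
accessible from both by sequences of cycle pushing moves. -/
theorem requiv_iff_common_cyclePush {V E : Type} [Fintype V] [DecidableEq V]
    [Fintype E] [DecidableEq E] (S : RotorSystem V E) (ρ₁ ρ₂ : S.RConf) :
    S.REquiv ρ₁ ρ₂ ↔
      ∃ ρ' : S.RConf, Relation.ReflTransGen S.IsCyclePush ρ₁ ρ' ∧
        Relation.ReflTransGen S.IsCyclePush ρ₂ ρ' := by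
  have hone : ∀ v : S.V0, 0 < (1 : S.PConf) v := fun _ => one_pos
  constructor
  · rintro ⟨σ, hσ⟩
    obtain ⟨τ₁, h₁, hac₁⟩ := S.exists_reflTransGen_cyclePush_isAcyclicConf ρ₁
    obtain ⟨τ₂, h₂, hac₂⟩ := S.exists_reflTransGen_cyclePush_isAcyclicConf ρ₂
    have h : S.act 1 (S.act σ τ₁) = S.act 1 (S.act σ τ₂) := by
      rw [S.act_eq_of_reflTransGen (S.reflTransGen_cyclePush_act h₁ σ) hone, hσ,
        S.act_eq_of_reflTransGen (S.reflTransGen_cyclePush_act h₂ σ) hone]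
    have hτ : S.act σ τ₁ = S.act σ τ₂ :=
      S.injOn_act 1 (S.mapsTo_act σ hac₁) (S.mapsTo_act σ hac₂) h
    exact ⟨τ₁, h₁, S.injOn_act σ hac₁ hac₂ hτ ▸ h₂⟩
  · rintro ⟨ρ, h₁, h₂⟩
    exact ⟨1, (S.act_eq_of_reflTransGen h₁ hone).symm.trans (S.act_eq_of_reflTransGen h₂ hone)⟩
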